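/- Let (Ω, μ) be a σ-finite measure space and F : Ω → H weakly measurable. If the weakly defined map T_F : L²(Ω, μ) → H, ⟨T_F φ, h⟩ = ∫_Ω φ(ω)⟨F(ω), h⟩ dμ(ω), is a bounded operator, then F is a continuous Bessel mapping, i.e., there exists B > 0 with ∫_Ω |⟨f, F(ω)⟩|² dμ(ω) ≤ B‖f‖² for all f ∈ H. -/

import Mathlib

/-!
Fix `f ∈ H` and put `g ω = ⟪f, F ω⟫`. For `φ ∈ L²` the defining identity of `T` reads
`∫ φ · conj g = ⟪T φ, f⟫`, so `|∫ φ · conj g| ≤ ‖T‖ ‖f‖ ‖φ‖`. Testing this against the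
truncations `φₙ = 1_{sₙ} g`, where `sₙ` has finite measure and `|g| ≤ n` on `sₙ`, gives
`‖φₙ‖² ≤ ‖T‖ ‖f‖ ‖φₙ‖`, i.e. `‖φₙ‖ ≤ ‖T‖ ‖f‖`; σ-finiteness lets the `sₙ` exhaust `Ω`, and
Fatou's lemma yields `∫ |g|² ≤ ‖T‖² ‖f‖²`.
-/

open MeasureTheory

local notation "⟪" x ", " y "⟫" => @inner ℂ _ _ x y

open Filter Set ComplexConjugate

namespace MeasureTheory

variable {Ω : Type*} [MeasurableSpace Ω] {μ : Measure Ω}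

theorem exists_bounded_finite_measure_sets_eventually_mem [SigmaFinite μ] {E : Type*}
    [NormedAddCommGroup E] [MeasurableSpace E] [OpensMeasurableSpace E] {g : Ω → E}
    (hg : Measurable g) :
    ∃ s : ℕ → Set Ω, (∀ n, MeasurableSet (s n) ∧ μ (s n) ≠ ⊤ ∧ ∀ ω ∈ s n, ‖g ω‖ ≤ n) ∧
      ∀ ω, ∀ᶠ n in atTop, ω ∈ s n := by
  refine ⟨fun n => spanningSets μ n ∩ {ω | ‖g ω‖ ≤ n}, fun n => ⟨?_, ?_, fun ω hω => hω.2⟩,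
    fun ω => ?_⟩
  · exact (measurableSet_spanningSets μ n).inter (measurableSet_le hg.norm measurable_const)
  · exact (measure_mono inter_subset_left).trans_lt (measure_spanningSets_lt_top μ n) |>.ne
  · exact (eventually_mem_spanningSets μ ω).and
      (tendsto_natCast_atTop_atTop.eventually_ge_atTop ‖g ω‖)

theorem memLp_indicator_of_bound {E : Type*} [NormedAddCommGroup E] {p : ENNReal} {s : Set Ω}
    (hs : MeasurableSet s) (hμs : μ s ≠ ⊤) {g : Ω → E} (hg : AEStronglyMeasurable g μ) {C : ℝ}
    (hgC : ∀ ω ∈ s, ‖g ω‖ ≤ C) : MemLp (s.indicator g) p μ := by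
  have : IsFiniteMeasure (μ.restrict s) := ⟨by simpa using hμs.lt_top⟩
  exact (memLp_indicator_iff_restrict hs).2
    (.of_bound hg.restrict C ((ae_restrict_iff' hs).2 (ae_of_all _ hgC)))

theorem MemLp.integral_norm_sq_eq {E : Type*} [NormedAddCommGroup E] {g : Ω → E}
    (hg : MemLp g 2 μ) : ∫ ω, ‖g ω‖ ^ 2 ∂μ = (eLpNorm g 2 μ).toReal ^ 2 := by
  rw [hg.eLpNorm_eq_integral_rpow_norm two_ne_zero ENNReal.ofNat_ne_top,
    ENNReal.toReal_ofReal (by positivity)]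
  simpa using
    (Real.rpow_inv_natCast_pow (integral_nonneg fun ω => by positivity) two_ne_zero).symm

variable {𝕜 : Type*} [RCLike 𝕜]

theorem L2.integral_mul_conj_eq_norm_sq {s : Set Ω} {g : Ω → 𝕜} {φ : Lp 𝕜 2 μ}
    (hφ : φ =ᵐ[μ] s.indicator g) : ∫ ω, φ ω * conj (g ω) ∂μ = (‖φ‖ ^ 2 : 𝕜) := by
  rw [← inner_self_eq_norm_sq_to_K, L2.inner_def]
  refine integral_congr_ae ?_
  filter_upwards [hφ] with ω hω
  by_cases hs : ω ∈ s
  · simp [hω, indicator_of_mem hs, RCLike.mul_conj]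
  · simp [hω, indicator_of_notMem hs]

theorem eLpNorm_two_le_of_norm_integral_mul_conj_le [SigmaFinite μ] {g : Ω → 𝕜}
    (hg : Measurable g) {C : ℝ}
    (hC : ∀ φ : Lp 𝕜 2 μ, ‖∫ ω, φ ω * conj (g ω) ∂μ‖ ≤ C * ‖φ‖) :
    eLpNorm g 2 μ ≤ ENNReal.ofReal C := by
  obtain ⟨s, hs, hmem⟩ := exists_bounded_finite_measure_sets_eventually_mem (μ := μ) hg
  have hgs (n : ℕ) : MemLp ((s n).indicator g) 2 μ :=
    memLp_indicator_of_bound (hs n).1 (hs n).2.1 hg.aestronglyMeasurable (hs n).2.2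
  have hbound (n : ℕ) : eLpNorm ((s n).indicator g) 2 μ ≤ ENNReal.ofReal C := by
    obtain ⟨φ, hφg, hφ⟩ : ∃ φ : Lp 𝕜 2 μ, φ =ᵐ[μ] (s n).indicator g ∧
        ‖φ‖ₑ = eLpNorm ((s n).indicator g) 2 μ :=
      ⟨_, (hgs n).coeFn_toLp, Lp.enorm_toLp _⟩
    have hφC : ‖φ‖ ^ 2 ≤ C * ‖φ‖ := by
      simpa [L2.integral_mul_conj_eq_norm_sq hφg] using hC φ
    rw [← hφ, ← ofReal_norm]
    rcases (norm_nonneg φ).eq_or_lt with h | h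
    · simp [← h]
    · exact ENNReal.ofReal_le_ofReal (le_of_mul_le_mul_right (by nlinarith) h)
  have hlim : ∀ ω, Tendsto (fun n => (s n).indicator g ω) atTop (nhds (g ω)) := fun ω =>
    tendsto_const_nhds.congr' ((hmem ω).mono fun n hn => (indicator_of_mem hn g).symm)
  calc eLpNorm g 2 μ ≤ atTop.liminf fun n => eLpNorm ((s n).indicator g) 2 μ :=
        Lp.eLpNorm_lim_le_liminf_eLpNorm (fun n => (hgs n).1) g (ae_of_all _ hlim)
    _ ≤ ENNReal.ofReal C := liminf_le_of_frequently_le' (.of_forall hbound)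

theorem integral_norm_sq_le_of_norm_integral_mul_conj_le [SigmaFinite μ] {g : Ω → 𝕜}
    (hg : Measurable g) {C : ℝ} (hC₀ : 0 ≤ C)
    (hC : ∀ φ : Lp 𝕜 2 μ, ‖∫ ω, φ ω * conj (g ω) ∂μ‖ ≤ C * ‖φ‖) :
    ∫ ω, ‖g ω‖ ^ 2 ∂μ ≤ C ^ 2 := by
  have hle := eLpNorm_two_le_of_norm_integral_mul_conj_le hg hC
  have hg₂ : MemLp g 2 μ := ⟨hg.aestronglyMeasurable, hle.trans_lt ENNReal.ofReal_lt_top⟩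
  rw [hg₂.integral_norm_sq_eq]
  gcongr
  exact ENNReal.toReal_le_of_le_ofReal hC₀ hle

end MeasureTheory

theorem bounded_synthesis_implies_bessel_general
    {H : Type*} [NormedAddCommGroup H] [InnerProductSpace ℂ H]
    {Ω : Type*} [MeasurableSpace Ω] (μ : Measure Ω) [SigmaFinite μ]
    (F : Ω → H)
    (hmeas : ∀ f : H, Measurable fun ω => ⟪f, F ω⟫)
    (T : Lp ℂ 2 μ →L[ℂ] H)
    (hT : ∀ (φ : Lp ℂ 2 μ) (h : H), ⟪T φ, h⟫ = ∫ ω, (φ : Ω → ℂ) ω * ⟪F ω, h⟫ ∂μ) :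
    ∃ B : ℝ, 0 < B ∧ ∀ f : H, ∫ ω, ‖⟪f, F ω⟫‖ ^ 2 ∂μ ≤ B * ‖f‖ ^ 2 := by
  refine ⟨‖T‖ ^ 2 + 1, by positivity, fun f => ?_⟩
  have hdual (φ : Lp ℂ 2 μ) : ‖∫ ω, φ ω * conj ⟪f, F ω⟫ ∂μ‖ ≤ ‖T‖ * ‖f‖ * ‖φ‖ := by
    simp_rw [inner_conj_symm, ← hT]
    calc ‖⟪T φ, f⟫‖ ≤ ‖T φ‖ * ‖f‖ := norm_inner_le_norm _ _
      _ ≤ ‖T‖ * ‖φ‖ * ‖f‖ := by gcongr; exact T.le_opNorm φ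
      _ = ‖T‖ * ‖f‖ * ‖φ‖ := by ring
  calc ∫ ω, ‖⟪f, F ω⟫‖ ^ 2 ∂μ ≤ (‖T‖ * ‖f‖) ^ 2 :=
        integral_norm_sq_le_of_norm_integral_mul_conj_le (hmeas f) (by positivity) hdual
    _ ≤ (‖T‖ ^ 2 + 1) * ‖f‖ ^ 2 := by rw [mul_pow]; gcongr; linarith

/-- If `(Ω,μ)` is σ-finite and the weakly defined synthesis map is a bounded operator,
then `F` is a continuous Bessel mapping. -/
theorem bounded_synthesis_implies_bessel
    {H : Type*} [NormedAddCommGroup H] [InnerProductSpace ℂ H] [CompleteSpace H]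
    {Ω : Type*} [MeasurableSpace Ω] (μ : Measure Ω) [SigmaFinite μ]
    (F : Ω → H)
    (hmeas : ∀ f : H, Measurable fun ω => ⟪f, F ω⟫)
    (T : Lp ℂ 2 μ →L[ℂ] H)
    (hT : ∀ (φ : Lp ℂ 2 μ) (h : H), ⟪T φ, h⟫ = ∫ ω, (φ : Ω → ℂ) ω * ⟪F ω, h⟫ ∂μ) :
    ∃ B : ℝ, 0 < B ∧ ∀ f : H, ∫ ω, ‖⟪f, F ω⟫‖ ^ 2 ∂μ ≤ B * ‖f‖ ^ 2 :=
  bounded_synthesis_implies_bessel_general μ F hmeas T hT
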